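/- arXiv:2204.10279 — 6 statements merged into one kernel-verified Lean document; each statement's English description precedes it below -/
import Mathlib

section
/- Let $X$ be a geodesic metric space, $Y$ a metric space, and $\{Z_i\}_{i=1}^{\infty}$ a countable family of sets covering $X$. Let $f\colon X\to Y$ be a continuous mapping whose restriction to each $Z_i$ is Lipschitz with Lipschitz constant at most $L$ for some fixed $L>0$. Then $f$ is Lipschitz on all of $X$ with Lipschitz constant at most $L$. -/
/-!
Along a geodesic `c` from `x` to `y`, the real function `h t = dist (f x) (f (c t))` is continuous on
`[0, d]` and `L`-Lipschitz on the closure of each piece `c⁻¹ Zᵢ`. By the intermediate value theorem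
`h [0, d]` contains an interval of length `dist (f x) (f y)`, while splitting `[0, d]` into disjoint
measurable parts shows that the Lebesgue measure of `h [0, d]` is at most `L d`.
-/

open Set MeasureTheory
open scoped NNReal

theorem LipschitzOnWith.volume_image_le {f : ℝ → ℝ} {K : ℝ≥0} {s : Set ℝ}
    (hf : LipschitzOnWith K f s) : volume (f '' s) ≤ K * volume s := by
  simpa [hausdorffMeasure_real] using hf.hausdorffMeasure_image_le zero_le_one

theorem abs_sub_le_of_lipschitzOnWith_of_cover {h : ℝ → ℝ} {a b : ℝ} {K : ℝ≥0} (hab : a ≤ b)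
    (hh : ContinuousOn h (Icc a b)) {A : ℕ → Set ℝ} (hA : ∀ i, MeasurableSet (A i))
    (hAab : ∀ i, A i ⊆ Icc a b) (hcover : Icc a b ⊆ ⋃ i, A i)
    (hlip : ∀ i, LipschitzOnWith K h (A i)) : |h b - h a| ≤ K * (b - a) := by
  have hvol : ENNReal.ofReal |h b - h a| ≤ ENNReal.ofReal (K * (b - a)) :=
    calc ENNReal.ofReal |h b - h a| = volume (uIcc (h a) (h b)) := Real.volume_interval.symm
      _ ≤ volume (h '' Icc a b) := by
        gcongr
        rw [← uIcc_of_le hab] at hh ⊢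
        exact intermediate_value_uIcc hh
      _ ≤ volume (⋃ i, h '' disjointed A i) := by
        gcongr
        rw [← image_iUnion, iUnion_disjointed]
        exact image_mono hcover
      _ ≤ ∑' i, volume (h '' disjointed A i) := measure_iUnion_le _
      _ ≤ ∑' i, K * volume (disjointed A i) :=
        ENNReal.tsum_le_tsum fun i => ((hlip i).mono (disjointed_subset A i)).volume_image_le
      _ = K * volume (⋃ i, A i) := by
        rw [ENNReal.tsum_mul_left, ← measure_iUnion (disjoint_disjointed A)
          (MeasurableSet.disjointed hA), iUnion_disjointed]
      _ ≤ K * volume (Icc a b) := by gcongr; exact iUnion_subset hAab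
      _ = ENNReal.ofReal (K * (b - a)) := by
        rw [Real.volume_Icc, ENNReal.ofReal_mul K.coe_nonneg, ENNReal.ofReal_coe_nnreal]
  exact (ENNReal.ofReal_le_ofReal_iff (by have := sub_nonneg.2 hab; positivity)).1 hvol

theorem dist_le_of_lipschitzOnWith_of_cover {Y : Type*} [PseudoMetricSpace Y] {g : ℝ → Y}
    {a b : ℝ} {K : ℝ≥0} (hab : a ≤ b) (hg : ContinuousOn g (Icc a b)) {B : ℕ → Set ℝ}
    (hBab : ∀ i, B i ⊆ Icc a b) (hcover : Icc a b ⊆ ⋃ i, B i)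
    (hlip : ∀ i, LipschitzOnWith K g (B i)) : dist (g a) (g b) ≤ K * (b - a) := by
  have hclosure : ∀ i, closure (B i) ⊆ Icc a b := fun i => closure_minimal (hBab i) isClosed_Icc
  have hdist : LipschitzWith 1 (dist (g a)) := LipschitzWith.dist_right (g a)
  have hlip' : ∀ i, LipschitzOnWith K (dist (g a) ∘ g) (closure (B i)) := fun i => by
    simpa only [one_mul] using hdist.comp_lipschitzOnWith ((hlip i).closure (hg.mono (hclosure i)))
  simpa using abs_sub_le_of_lipschitzOnWith_of_cover hab (hdist.continuous.comp_continuousOn hg)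
    (fun i => isClosed_closure.measurableSet) hclosure
    (hcover.trans (iUnion_mono fun i => subset_closure)) hlip'

/-- the gluing lemma for Lipschitz mappings on geodesic spaces. -/
theorem lipschitz_of_countable_cover {X Y : Type*} [MetricSpace X] [MetricSpace Y]
    (geo : ∀ x y : X, ∃ c : ℝ → X, c 0 = x ∧ c (dist x y) = y ∧
      ∀ s ∈ Set.Icc (0:ℝ) (dist x y), ∀ t ∈ Set.Icc (0:ℝ) (dist x y),
        dist (c s) (c t) = |s - t|)
    (Z : ℕ → Set X) (hZ : (Set.univ : Set X) ⊆ ⋃ i, Z i)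
    (f : X → Y) (hf : Continuous f) (L : ℝ) (hL : 0 < L)
    (hLip : ∀ i : ℕ, ∀ x ∈ Z i, ∀ y ∈ Z i, dist (f x) (f y) ≤ L * dist x y) :
    ∀ x y : X, dist (f x) (f y) ≤ L * dist x y := by
  intro x y
  obtain ⟨c, hc0, hcd, hiso⟩ := geo x y
  have hc : LipschitzOnWith 1 c (Icc 0 (dist x y)) :=
    LipschitzOnWith.of_dist_le_mul fun s hs t ht => by simp [hiso s hs t ht, Real.dist_eq]
  have hlip : ∀ i, LipschitzOnWith L.toNNReal (f ∘ c) (Icc 0 (dist x y) ∩ c ⁻¹' Z i) := fun i =>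
    LipschitzOnWith.of_dist_le_mul fun s hs t ht => by
      rw [Real.coe_toNNReal L hL.le, Real.dist_eq, ← hiso s hs.1 t ht.1]
      exact hLip i _ hs.2 _ ht.2
  have hcover : Icc 0 (dist x y) ⊆ ⋃ i, Icc 0 (dist x y) ∩ c ⁻¹' Z i := fun t ht => by
    simpa [ht] using hZ (mem_univ (c t))
  simpa [hc0, hcd, Real.coe_toNNReal L hL.le] using
    dist_le_of_lipschitzOnWith_of_cover dist_nonneg (hf.comp_continuousOn hc.continuousOn)
      (fun i => inter_subset_left) hcover hlip
end

section
/- Let $X$ be an unbounded complete hyperbolic space, $\theta\in X$, and $\phi$ satisfy conditions (C1)–(C4). Let $f,g$ be nonexpansive self-mappings of $X$ with $d_{\theta,\phi}(f,g)\le\tfrac12\phi^{-1}(1/m)$ for some $m\in\mathbb{N}$. Then $\rho(f(z),g(z))\le \frac{2}{\phi^{-1}(1/m)}\,d_{\theta,\phi}(f,g)$ for all $z\in\bar B(\theta,m)$. -/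
/-!
On the ball `closedBall θ m` the distance `dist (f z) (g z)` is at most `d := d_{m,θ}(f,g)`, and
the `m`-th term `φ⁻¹(1/m) · d/(1+d)` of the series defining `d_{θ,φ}(f,g)` is at most the whole sum,
hence at most `φ⁻¹(1/m)/2`. So `d/(1+d) ≤ 1/2`, i.e. `d ≤ 1`, and then `d ≤ 2 · d/(1+d)`.
This uses `φ⁻¹ > 0` on `(0, 1]`, which follows from the intermediate value theorem: `φ` is
continuous, tends to `0` at `0⁺` and attains `1`.
-/

/-- A hyperbolic metric space structure: a choice of convex combination
`W x y l = (1-l) x ⊕ l y` along distinguished geodesic segments. -/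
structure HyperbolicW (X : Type*) [MetricSpace X] where
  W : X → X → ℝ → X
  dist_left : ∀ x y : X, ∀ l : ℝ, l ∈ Set.Icc (0:ℝ) 1 →
    dist x (W x y l) = l * dist x y
  dist_right : ∀ x y : X, ∀ l : ℝ, l ∈ Set.Icc (0:ℝ) 1 →
    dist (W x y l) y = (1 - l) * dist x y
  hyp : ∀ x y z : X, ∀ l : ℝ, l ∈ Set.Icc (0:ℝ) 1 →
    dist (W x y l) (W x z l) ≤ l * dist y z
  subseg : ∀ x y : X, ∀ l μ : ℝ, μ ∈ Set.Icc (0:ℝ) 1 → l ∈ Set.Icc (0:ℝ) 1 →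
    μ ≤ l → 0 < l → W x y μ = W x (W x y l) (μ / l)

/-- A mapping is nonexpansive if it is 1-Lipschitz. -/
def Nonexp {X : Type*} [MetricSpace X] (f : X → X) : Prop :=
  ∀ x y : X, dist (f x) (f y) ≤ dist x y

/-- A metric space is unbounded. -/
def Unbdd (X : Type*) [MetricSpace X] : Prop :=
  ¬ Bornology.IsBounded (Set.univ : Set X)

/-- `d_{n,θ}(f,g) = sup { dist (f x) (g x) : x ∈ closedBall θ n }`. -/
noncomputable def dnSup {X : Type*} [MetricSpace X] (θ : X) (n : ℕ) (f g : X → X) : ℝ :=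
  sSup ((fun x => dist (f x) (g x)) '' Metric.closedBall θ (n : ℝ))

/-- The metric `d_{θ,φ}(f,g) = ∑ₙ φ⁻¹(1/n) dₙ/(1+dₙ)`, expressed through
`ψ = φ⁻¹` (the sum over `n ≥ 1` is reindexed as a sum over `n + 1`, `n : ℕ`). -/
noncomputable def Dphi {X : Type*} [MetricSpace X] (θ : X) (ψ : ℝ → ℝ) (f g : X → X) : ℝ :=
  ∑' n : ℕ, ψ (1 / ((n : ℝ) + 1)) *
    (dnSup θ (n + 1) f g / (1 + dnSup θ (n + 1) f g))

open Set Filter Topology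

theorem Ioc_zero_subset_image_of_tendsto_zero {φ : ℝ → ℝ} {t : ℝ} (ht : 0 < t)
    (hcont : ContinuousOn φ (Ioc 0 t)) (hlim : Tendsto φ (𝓝[>] 0) (𝓝 0)) :
    Ioc 0 (φ t) ⊆ φ '' Ioc 0 t :=
  haveI := left_nhdsWithin_Ioc_neBot ht
  isPreconnected_Ioc.intermediate_value_Ioc (l := 𝓝[Ioc 0 t] 0) (right_mem_Ioc.2 ht) inf_le_right
    hcont (hlim.mono_left (nhdsWithin_mono _ Ioc_subset_Ioi_self))

theorem pos_of_leftInvOn_of_tendsto_zero {φ ψ : ℝ → ℝ} {t : ℝ} (ht : 0 < t)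
    (hcont : ContinuousOn φ (Ioc 0 t)) (hlim : Tendsto φ (𝓝[>] 0) (𝓝 0))
    (hinv : ∀ s ∈ Ioc 0 t, ψ (φ s) = s) {a : ℝ} (ha : a ∈ Ioc 0 (φ t)) : 0 < ψ a := by
  obtain ⟨s, hs, rfl⟩ := Ioc_zero_subset_image_of_tendsto_zero ht hcont hlim ha
  rw [hinv s hs]
  exact hs.1

section Nonexp

variable {X : Type*} [MetricSpace X] {f g : X → X}

theorem bddAbove_dist_image_closedBall (hf : Nonexp f) (hg : Nonexp g) (θ : X) (r : ℝ) :
    BddAbove ((fun x => dist (f x) (g x)) '' Metric.closedBall θ r) := by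
  refine ⟨dist (f θ) (g θ) + 2 * r, ?_⟩
  rintro _ ⟨x, hx, rfl⟩
  have hxθ : dist x θ ≤ r := Metric.mem_closedBall.1 hx
  calc dist (f x) (g x) ≤ dist (f x) (f θ) + dist (f θ) (g θ) + dist (g θ) (g x) :=
        dist_triangle4 _ _ _ _
    _ ≤ dist x θ + dist (f θ) (g θ) + dist θ x := by gcongr <;> [exact hf x θ; exact hg θ x]
    _ ≤ dist (f θ) (g θ) + 2 * r := by rw [dist_comm θ x]; linarith

theorem dist_le_dnSup (hf : Nonexp f) (hg : Nonexp g) {θ z : X} {n : ℕ}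
    (hz : z ∈ Metric.closedBall θ (n : ℝ)) : dist (f z) (g z) ≤ dnSup θ n f g :=
  le_csSup (bddAbove_dist_image_closedBall hf hg θ n) ⟨z, hz, rfl⟩

theorem dnSup_nonneg (hf : Nonexp f) (hg : Nonexp g) (θ : X) (n : ℕ) : 0 ≤ dnSup θ n f g :=
  dist_nonneg.trans (dist_le_dnSup hf hg (Metric.mem_closedBall_self (Nat.cast_nonneg n)))

theorem term_le_Dphi (hf : Nonexp f) (hg : Nonexp g) (θ : X) {ψ : ℝ → ℝ}
    (hψ : ∀ n : ℕ, 0 ≤ ψ (1 / ((n : ℝ) + 1))) (hsum : Summable fun n : ℕ => ψ (1 / ((n : ℝ) + 1)))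
    {m : ℕ} (hm : 1 ≤ m) :
    ψ (1 / (m : ℝ)) * (dnSup θ m f g / (1 + dnSup θ m f g)) ≤ Dphi θ ψ f g := by
  have hfrac : ∀ n : ℕ, 0 ≤ dnSup θ n f g / (1 + dnSup θ n f g) ∧
      dnSup θ n f g / (1 + dnSup θ n f g) ≤ 1 := fun n => by
    have := dnSup_nonneg hf hg θ n
    exact ⟨by positivity, (div_le_one (by linarith)).2 (by linarith)⟩
  have hterm_nonneg : ∀ n : ℕ,
      0 ≤ ψ (1 / ((n : ℝ) + 1)) * (dnSup θ (n + 1) f g / (1 + dnSup θ (n + 1) f g)) :=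
    fun n => mul_nonneg (hψ n) (hfrac (n + 1)).1
  have hsumm : Summable fun n : ℕ =>
      ψ (1 / ((n : ℝ) + 1)) * (dnSup θ (n + 1) f g / (1 + dnSup θ (n + 1) f g)) :=
    hsum.of_nonneg_of_le hterm_nonneg fun n => mul_le_of_le_one_right (hψ n) (hfrac (n + 1)).2
  obtain ⟨k, rfl⟩ := Nat.exists_eq_add_of_le' hm
  simpa [Dphi] using hsumm.le_tsum k fun j _ => hterm_nonneg j

end Nonexp

theorem le_two_mul_div_one_add {d : ℝ} (hd : 0 ≤ d) (h : d / (1 + d) ≤ 1 / 2) :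
    d ≤ 2 * (d / (1 + d)) := by
  have h1d : 0 < 1 + d := by linarith
  have hd1 : d ≤ 1 := by rw [div_le_iff₀ h1d] at h; linarith
  rw [mul_div_assoc', le_div_iff₀ h1d]
  nlinarith

theorem local_from_global_general {X : Type*} [MetricSpace X] (θ : X)
    -- φ satisfies (C1)–(C4), with inverse ψ:
    (b : ℝ) (I : Set ℝ)
    (hI : I = Set.Ioo 0 b ∨ I = Set.Ioc 0 b)
    (φ ψ : ℝ → ℝ)
    (hcont : ContinuousOn φ I)
    (hlim : Filter.Tendsto φ (nhdsWithin 0 (Set.Ioi 0)) (nhds 0))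
    (hone : ∃ t ∈ I, φ t = 1)
    (hinv1 : ∀ t ∈ I, ψ (φ t) = t)
    (hC4 : Summable (fun n : ℕ => ((n:ℝ) + 1) * ψ (1 / ((n:ℝ) + 1))))
    -- the mappings:
    (f g : X → X) (hf : Nonexp f) (hg : Nonexp g)
    (m : ℕ) (hm : 1 ≤ m)
    (hd : Dphi θ ψ f g ≤ ψ (1 / (m:ℝ)) / 2) :
    ∀ z ∈ Metric.closedBall θ (m : ℝ),
      dist (f z) (g z) ≤ (2 / ψ (1 / (m:ℝ))) * Dphi θ ψ f g := by
  intro z hz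
  obtain ⟨t₁, ht₁, hφt₁⟩ := hone
  obtain ⟨ht₁_pos, hIoc⟩ : 0 < t₁ ∧ Ioc 0 t₁ ⊆ I := by
    rcases hI with rfl | rfl
    exacts [⟨ht₁.1, Ioc_subset_Ioo_right ht₁.2⟩, ⟨ht₁.1, Ioc_subset_Ioc_right ht₁.2⟩]
  have hψ_pos : ∀ a ∈ Ioc (0 : ℝ) 1, 0 < ψ a := fun a ha =>
    pos_of_leftInvOn_of_tendsto_zero ht₁_pos (hcont.mono hIoc) hlim
      (fun s hs => hinv1 s (hIoc hs)) (hφt₁ ▸ ha)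
  have hψ_inv_pos : ∀ n : ℕ, 1 ≤ n → 0 < ψ (1 / (n : ℝ)) := fun n hn => by
    have hn' : (1 : ℝ) ≤ n := by exact_mod_cast hn
    exact hψ_pos _ ⟨by positivity, (div_le_one (by linarith)).2 hn'⟩
  have hψ_succ : ∀ n : ℕ, 0 ≤ ψ (1 / ((n : ℝ) + 1)) := fun n => by
    exact_mod_cast (hψ_inv_pos (n + 1) (Nat.le_add_left 1 n)).le
  have hsum : Summable fun n : ℕ => ψ (1 / ((n : ℝ) + 1)) :=
    hC4.of_nonneg_of_le hψ_succ fun n => le_mul_of_one_le_left (hψ_succ n) (by simp)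
  set d := dnSup θ m f g
  have hψm := hψ_inv_pos m hm
  have hterm := term_le_Dphi hf hg θ hψ_succ hsum hm
  have hhalf : d / (1 + d) ≤ 1 / 2 := le_of_mul_le_mul_left (by linarith) hψm
  calc dist (f z) (g z) ≤ d := dist_le_dnSup hf hg hz
    _ ≤ 2 * (d / (1 + d)) := le_two_mul_div_one_add (dnSup_nonneg hf hg θ m) hhalf
    _ ≤ 2 / ψ (1 / (m : ℝ)) * Dphi θ ψ f g := by
      rw [div_mul_eq_mul_div, le_div_iff₀ hψm]; linarith

/-- pointwise distance on a ball is controlled by `d_{θ,φ}`. -/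
theorem local_from_global {X : Type*} [MetricSpace X] [CompleteSpace X]
    (H : HyperbolicW X) (hub : Unbdd X) (θ : X)
    -- φ satisfies (C1)–(C4), with inverse ψ:
    (b : ℝ) (hb : 0 < b) (I : Set ℝ)
    (hI : I = Set.Ioo 0 b ∨ I = Set.Ioc 0 b)
    (φ ψ : ℝ → ℝ)
    (hpos : ∀ t ∈ I, 0 < φ t)
    (hcont : ContinuousOn φ I)
    (hmono : StrictMonoOn φ I)
    (hlim : Filter.Tendsto φ (nhdsWithin 0 (Set.Ioi 0)) (nhds 0))
    (η : ℝ) (hη : η ∈ I)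
    (hconc : ConcaveOn ℝ (Set.Ioo 0 η) φ)
    (hηφ : η ≤ φ η)
    (hone : ∃ t ∈ I, φ t = 1)
    (hinv1 : ∀ t ∈ I, ψ (φ t) = t)
    (hinv2 : ∀ a ∈ Set.Ioc (0:ℝ) (φ η), ψ a ∈ I ∧ φ (ψ a) = a)
    (hC3 : ∀ k : ℕ, ∃ C : ℝ, 0 < C ∧ ∀ m : ℕ, 1 ≤ m →
      ψ (1 / (m:ℝ)) ≤ C * ψ (1 / ((k:ℝ) + (m:ℝ))))
    (hC4 : Summable (fun n : ℕ => ((n:ℝ) + 1) * ψ (1 / ((n:ℝ) + 1))))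
    -- the mappings:
    (f g : X → X) (hf : Nonexp f) (hg : Nonexp g)
    (m : ℕ) (hm : 1 ≤ m)
    (hd : Dphi θ ψ f g ≤ ψ (1 / (m:ℝ)) / 2) :
    ∀ z ∈ Metric.closedBall θ (m : ℝ),
      dist (f z) (g z) ≤ (2 / ψ (1 / (m:ℝ))) * Dphi θ ψ f g :=
  local_from_global_general θ b I hI φ ψ hcont hlim hone hinv1 hC4 f g hf hg m hm hd
end

section
/- Let $X$ be an unbounded complete hyperbolic space and $\theta\in X$. For $s=1$, the topology generated by the metric $d_{\theta,1}(f,g)=\sup_{x\in X}\frac{\rho(f(x),g(x))}{1+\rho(x,\theta)}$ on the space of nonexpansive self-mappings of $X$ is strictly finer than the topology of uniform convergence on bounded sets: there exists a sequence of nonexpansive mappings $f_n$ converging uniformly on bounded sets to the constant mapping $g\equiv\theta$ such that $d_{\theta,1}(f_n,g)\ge 1/3$ for all $n$. -/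
/-- The metric `d_{θ,s}(f,g) = sup_x dist (f x) (g x) / (1 + dist x θ ^ s)`. -/
noncomputable def Ds {X : Type*} [MetricSpace X] (θ : X) (s : ℝ) (f g : X → X) : ℝ :=
  ⨆ x : X, dist (f x) (g x) / (1 + dist x θ ^ s)

/-- Distance between two points on the same distinguished geodesic. -/
lemma seg_dist {X : Type*} [MetricSpace X] (H : HyperbolicW X) (x y : X) {a b : ℝ}
    (ha : a ∈ Set.Icc (0:ℝ) 1) (hb : b ∈ Set.Icc (0:ℝ) 1) (hab : a ≤ b) :
    dist (H.W x y a) (H.W x y b) = (b - a) * dist x y := by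
  rcases eq_or_lt_of_le hb.1 with hb0 | hb0
  · have ha0 : a = 0 := le_antisymm (hab.trans hb0.symm.le) ha.1
    subst ha0
    rw [← hb0]
    simp
  · have hq : a / b ∈ Set.Icc (0:ℝ) 1 :=
      ⟨div_nonneg ha.1 hb0.le, div_le_one_of_le₀ hab hb0.le⟩
    rw [H.subseg x y b a ha hb hab hb0, H.dist_right x (H.W x y b) (a/b) hq,
        H.dist_left x y b hb]
    field_simp

/-- for `s = 1` the metric `d_{θ,1}` is strictly finer than
uniform convergence on bounded sets: there is a sequence of nonexpansive
mappings converging uniformly on bounded sets to the constant map `θ`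
while staying at `d_{θ,1}`-distance at least `1/3` from it. -/
theorem ds_one_strictly_finer {X : Type*} [MetricSpace X] [CompleteSpace X]
    (H : HyperbolicW X) (hub : Unbdd X) (θ : X) :
    ∃ f : ℕ → X → X,
      (∀ n, Nonexp (f n)) ∧
      (∀ B : Set X, Bornology.IsBounded B → ∀ ε : ℝ, 0 < ε →
        ∃ N : ℕ, ∀ n ≥ N, ∀ x ∈ B, dist (f n x) θ < ε) ∧
      (∀ n : ℕ, 1 ≤ n → 1 / 3 ≤ Ds θ 1 (f n) (fun _ => θ)) := by
  -- choose far away points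
  have hz : ∀ n : ℕ, ∃ zz : X, 2 * (n:ℝ) < dist θ zz := by
    intro n
    by_contra h
    push_neg at h
    exact hub ((Metric.isBounded_iff_subset_closedBall θ).mpr
      ⟨2*n, fun x _ => by simpa [Metric.mem_closedBall, dist_comm] using h x⟩)
  choose z hzd using hz
  have hzpos : ∀ n : ℕ, 0 < dist θ (z n) := fun n =>
    lt_of_le_of_lt (by positivity) (hzd n)
  set xn : ℕ → X := fun n => H.W θ (z n) (2 * n / dist θ (z n)) with hxndef
  have hmem : ∀ n : ℕ, 2 * (n:ℝ) / dist θ (z n) ∈ Set.Icc (0:ℝ) 1 := fun n =>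
    ⟨div_nonneg (by positivity) dist_nonneg, div_le_one_of_le₀ (hzd n).le dist_nonneg⟩
  have hxd : ∀ n : ℕ, dist θ (xn n) = 2 * n := by
    intro n
    show dist θ (H.W θ (z n) (2 * n / dist θ (z n))) = 2 * n
    rw [H.dist_left θ (z n) _ (hmem n)]
    exact div_mul_cancel₀ _ (ne_of_gt (hzpos n))
  set lam : ℕ → X → ℝ := fun n x => (1/2) * max (1 - dist x (xn n) / n) 0 with hlamdef
  have hlmem : ∀ n x, lam n x ∈ Set.Icc (0:ℝ) 1 := by
    intro n x
    constructor
    · have : (0:ℝ) ≤ max (1 - dist x (xn n) / n) 0 := le_max_right _ _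
      simp only [hlamdef]; linarith
    · have h1 : max (1 - dist x (xn n) / n) 0 ≤ 1 := by
        apply max_le _ zero_le_one
        have : 0 ≤ dist x (xn n) / n := by positivity
        linarith
      simp only [hlamdef]; linarith
  set f : ℕ → X → X := fun n x => H.W θ (xn n) (lam n x) with hfdef
  have hdistf : ∀ n x, dist θ (f n x) = lam n x * (2*n) := by
    intro n x
    show dist θ (H.W θ (xn n) (lam n x)) = lam n x * (2*n)
    rw [H.dist_left θ (xn n) _ (hlmem n x), hxd]
  have hfd : ∀ n x y, dist (f n x) (f n y) = |lam n x - lam n y| * (2*n) := by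
    intro n x y
    rcases le_total (lam n x) (lam n y) with h | h
    · rw [show f n x = H.W θ (xn n) (lam n x) from rfl,
        show f n y = H.W θ (xn n) (lam n y) from rfl,
        seg_dist H θ (xn n) (hlmem n x) (hlmem n y) h, hxd, abs_sub_comm,
        abs_of_nonneg (by linarith)]
    · rw [dist_comm, show f n x = H.W θ (xn n) (lam n x) from rfl,
        show f n y = H.W θ (xn n) (lam n y) from rfl,
        seg_dist H θ (xn n) (hlmem n y) (hlmem n x) h, hxd,
        abs_of_nonneg (by linarith)]
  refine ⟨f, ?_, ?_, ?_⟩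
  · -- nonexpansive
    intro n x y
    rw [hfd]
    rcases Nat.eq_zero_or_pos n with rfl | hn
    · simpa using dist_nonneg
    · have hn1 : (1:ℝ) ≤ n := by exact_mod_cast hn
      have hnpos : (0:ℝ) < n := by linarith
      have key : |lam n x - lam n y| ≤ dist x y / (2*n) := by
        have h1 : |max (1 - dist x (xn n) / n) 0 - max (1 - dist y (xn n) / n) 0|
            ≤ |(1 - dist x (xn n) / n) - (1 - dist y (xn n) / n)| :=
          abs_max_sub_max_le_abs _ _ _
        have h2 : |(1 - dist x (xn n) / n) - (1 - dist y (xn n) / n)|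
            = |dist y (xn n) - dist x (xn n)| / n := by
          rw [show (1 - dist x (xn n) / n) - (1 - dist y (xn n) / n)
            = (dist y (xn n) - dist x (xn n)) / n by ring, abs_div,
            abs_of_pos hnpos]
        have h3 : |dist y (xn n) - dist x (xn n)| ≤ dist x y := by
          rw [dist_comm x y]; exact abs_dist_sub_le _ _ _
        have h4 : lam n x - lam n y = (1/2) * (max (1 - dist x (xn n) / n) 0
            - max (1 - dist y (xn n) / n) 0) := by simp only [hlamdef]; ring
        rw [h4, abs_mul, abs_of_pos (by norm_num : (0:ℝ) < 1/2)]
        rw [h2] at h1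
        have h6 : |max (1 - dist x (xn n) / n) 0 - max (1 - dist y (xn n) / n) 0|
            ≤ dist x y / n := h1.trans (by gcongr)
        have he : dist x y / (2*(n:ℝ)) = (1/2) * (dist x y / n) := by ring
        rw [he]
        linarith
      calc |lam n x - lam n y| * (2*n) ≤ (dist x y / (2*n)) * (2*n) := by
            gcongr
        _ = dist x y := by field_simp
  · -- uniform convergence on bounded sets
    intro B hB ε hε
    obtain ⟨R, hR⟩ := (Metric.isBounded_iff_subset_closedBall θ).1 hB
    refine ⟨⌈R⌉₊ + 1, fun n hn x hx => ?_⟩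
    have hn1 : 1 ≤ n := le_trans (Nat.le_add_left 1 _) hn
    have hnR : R ≤ (n:ℝ) := by
      calc R ≤ (⌈R⌉₊ : ℝ) := Nat.le_ceil R
        _ ≤ (n:ℝ) := by exact_mod_cast le_trans (Nat.le_add_right _ 1) hn
    have hnpos : (0:ℝ) < n := by exact_mod_cast hn1
    have hdx : dist x θ ≤ R := hR hx
    have hfar : (n:ℝ) ≤ dist x (xn n) := by
      have htri : dist θ (xn n) ≤ dist θ x + dist x (xn n) := dist_triangle _ _ _
      rw [hxd] at htri
      rw [dist_comm] at hdx
      linarith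
    have hmax : max (1 - dist x (xn n) / n) 0 = 0 := by
      apply max_eq_right
      have : 1 ≤ dist x (xn n) / n := (one_le_div hnpos).mpr hfar
      linarith
    have : lam n x = 0 := by simp only [hlamdef, hmax]; ring
    rw [dist_comm, hdistf, this]
    simpa using hε
  · -- lower bound in the Ds metric
    intro n hn
    have hn1 : (1:ℝ) ≤ n := by exact_mod_cast hn
    have hnpos : (0:ℝ) < n := by linarith
    have hbdd : BddAbove (Set.range fun x : X =>
        dist (f n x) θ / (1 + dist x θ ^ (1:ℝ))) := by
      refine ⟨(n:ℝ), ?_⟩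
      rintro _ ⟨x, rfl⟩
      have hnum : dist (f n x) θ ≤ n := by
        rw [dist_comm, hdistf]
        have hhalf : lam n x ≤ 1/2 := by
          have h1 : max (1 - dist x (xn n) / n) 0 ≤ 1 := by
            apply max_le _ zero_le_one
            have : 0 ≤ dist x (xn n) / n := by positivity
            linarith
          simp only [hlamdef]; linarith
        calc lam n x * (2*(n:ℝ)) ≤ (1/2) * (2*n) :=
              mul_le_mul_of_nonneg_right hhalf (by positivity)
          _ = n := by ring
      have hden : (1:ℝ) ≤ 1 + dist x θ ^ (1:ℝ) := by
        rw [Real.rpow_one]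
        have := dist_nonneg (x := x) (y := θ)
        linarith
      calc dist (f n x) θ / (1 + dist x θ ^ (1:ℝ)) ≤ dist (f n x) θ / 1 := by
            gcongr
        _ ≤ n := by simpa using hnum
    have hterm : (1:ℝ)/3 ≤ dist (f n (xn n)) θ / (1 + dist (xn n) θ ^ (1:ℝ)) := by
      have hlamx : lam n (xn n) = 1/2 := by
        simp only [hlamdef, dist_self, zero_div, sub_zero, max_eq_left zero_le_one]
        norm_num
      have h1 : dist (f n (xn n)) θ = n := by
        rw [dist_comm, hdistf, hlamx]; ring
      have h2 : dist (xn n) θ = 2*n := by rw [dist_comm]; exact hxd n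
      rw [h1, h2, Real.rpow_one]
      rw [div_le_div_iff₀ (by norm_num) (by linarith)]
      linarith
    calc (1:ℝ)/3 ≤ dist (f n (xn n)) θ / (1 + dist (xn n) θ ^ (1:ℝ)) := hterm
      _ ≤ Ds θ 1 (f n) (fun _ => θ) := le_ciSup hbdd (xn n)
end

section
/- Let $X$ be an unbounded hyperbolic space. For each $t_0>0$, $\lambda\in(0,1)$ and $x_0,y_0,v\in X$ with $\rho(x_0,y_0)=t_0$, there exists a nonexpansive mapping $\tau\colon X\to X$ such that (i) $\rho(\tau(x_0),\tau(y_0))>\lambda t_0$, (ii) $\tau(x)=v$ whenever $\rho(x,x_0)\ge t_0$, and (iii) $\rho(\tau(x),v)\le t_0$ for all $x\in X$. -/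
/-- the bump-mapping lemma. -/
theorem bump_mapping {X : Type*} [MetricSpace X] [CompleteSpace X]
    (H : HyperbolicW X) (hub : Unbdd X)
    (t₀ : ℝ) (ht₀ : 0 < t₀) (lam : ℝ) (hlam : lam ∈ Set.Ioo (0:ℝ) 1)
    (x₀ y₀ v : X) (hxy : dist x₀ y₀ = t₀) :
    ∃ τ : X → X, Nonexp τ ∧
      lam * t₀ < dist (τ x₀) (τ y₀) ∧
      (∀ x : X, t₀ ≤ dist x x₀ → τ x = v) ∧
      (∀ x : X, dist (τ x) v ≤ t₀) := by
  obtain ⟨lam_pos, lam_lt⟩ := hlam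
  -- find a point far from v
  have hw : ∃ w : X, t₀ < dist v w := by
    by_contra h
    push_neg at h
    exact hub ((Metric.isBounded_iff_subset_closedBall v).2
      ⟨t₀, fun x _ => by simpa [Metric.mem_closedBall, dist_comm] using h x⟩)
  obtain ⟨w, hw⟩ := hw
  have hdw : (0:ℝ) < dist v w := lt_trans ht₀ hw
  set l : ℝ := t₀ / dist v w with hl_def
  have hl : l ∈ Set.Icc (0:ℝ) 1 := by
    constructor
    · exact div_nonneg ht₀.le hdw.le
    · rw [hl_def, div_le_one hdw]; exact le_of_lt hw
  set u : X := H.W v w l with hu_def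
  have huv : dist v u = t₀ := by
    rw [hu_def, H.dist_left v w l hl, hl_def, div_mul_cancel₀ _ (ne_of_gt hdw)]
  -- the bump function
  set γ : X → ℝ := fun x => max ((t₀ - dist x x₀) / t₀) 0 with hγ_def
  have hγ01 : ∀ x : X, γ x ∈ Set.Icc (0:ℝ) 1 := by
    intro x
    constructor
    · exact le_max_right _ _
    · apply max_le
      · rw [div_le_one ht₀]
        have := dist_nonneg (x := x) (y := x₀)
        linarith
      · linarith
  set τ : X → X := fun x => H.W v u (γ x) with hτ_def
  -- key distance estimate along the segment
  have key : ∀ a b : ℝ, a ∈ Set.Icc (0:ℝ) 1 → b ∈ Set.Icc (0:ℝ) 1 → a ≤ b →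
      dist (H.W v u a) (H.W v u b) ≤ (b - a) * t₀ := by
    intro a b ha hb hab
    rcases eq_or_lt_of_le hb.1 with hb0 | hb0
    · have ha0 : a = 0 := le_antisymm (hab.trans hb0.symm.le) ha.1
      simp [ha0, ← hb0]
    · have hab' : a / b ∈ Set.Icc (0:ℝ) 1 := by
        constructor
        · exact div_nonneg ha.1 hb0.le
        · rw [div_le_one hb0]; exact hab
      rw [H.subseg v u b a ha hb hab hb0]
      have h1 : dist v (H.W v u b) = b * t₀ := by rw [H.dist_left v u b hb, huv]
      have h2 := H.dist_right v (H.W v u b) (a / b) hab'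
      rw [h2, h1]
      have : (1 - a / b) * (b * t₀) = (b - a) * t₀ := by
        field_simp
      rw [this]
  -- γ is (1/t₀)-Lipschitz
  have hγlip : ∀ x y : X, |γ x - γ y| ≤ dist x y / t₀ := by
    intro x y
    have h1 : |γ x - γ y| ≤ |(t₀ - dist x x₀) / t₀ - (t₀ - dist y x₀) / t₀| :=
      abs_max_sub_max_le_abs _ _ _
    have h2 : (t₀ - dist x x₀) / t₀ - (t₀ - dist y x₀) / t₀
        = (dist y x₀ - dist x x₀) / t₀ := by ring
    rw [h2, abs_div, abs_of_pos ht₀] at h1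
    refine h1.trans ?_
    gcongr
    rw [abs_sub_comm]
    exact abs_dist_sub_le x y x₀
  have hnonexp : Nonexp τ := by
    intro x y
    rcases le_total (γ x) (γ y) with h | h
    · calc dist (τ x) (τ y) ≤ (γ y - γ x) * t₀ := key _ _ (hγ01 x) (hγ01 y) h
        _ ≤ (dist x y / t₀) * t₀ := by
            gcongr
            have := hγlip x y
            rw [abs_sub_comm, abs_of_nonneg (by linarith)] at this
            exact this
        _ = dist x y := div_mul_cancel₀ _ (ne_of_gt ht₀)
    · calc dist (τ x) (τ y) = dist (τ y) (τ x) := dist_comm _ _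
        _ ≤ (γ x - γ y) * t₀ := key _ _ (hγ01 y) (hγ01 x) h
        _ ≤ (dist x y / t₀) * t₀ := by
            gcongr
            have := hγlip x y
            rw [abs_of_nonneg (by linarith)] at this
            exact this
        _ = dist x y := div_mul_cancel₀ _ (ne_of_gt ht₀)
  -- endpoint values
  have hW0 : H.W v u 0 = v := by
    have := H.dist_left v u 0 (by constructor <;> norm_num)
    rw [zero_mul] at this
    exact (dist_eq_zero.1 this).symm
  have hW1 : H.W v u 1 = u := by
    have := H.dist_right v u 1 (by constructor <;> norm_num)
    rw [sub_self, zero_mul] at this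
    exact dist_eq_zero.1 this
  have hγx₀ : γ x₀ = 1 := by
    simp only [hγ_def, dist_self, sub_zero, div_self (ne_of_gt ht₀)]
    norm_num
  have hγy₀ : γ y₀ = 0 := by
    simp only [hγ_def]
    rw [dist_comm, hxy]
    simp
  refine ⟨τ, hnonexp, ?_, ?_, ?_⟩
  · rw [hτ_def]
    simp only [hγx₀, hγy₀, hW0, hW1]
    rw [dist_comm, huv]
    nlinarith
  · intro x hx
    have : γ x = 0 := by
      simp only [hγ_def]
      rw [max_eq_right]
      apply div_nonpos_of_nonpos_of_nonneg _ (le_of_lt ht₀)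
      linarith
    rw [hτ_def]; simp only [this, hW0]
  · intro x
    rw [hτ_def]
    simp only
    rw [dist_comm, H.dist_left v u (γ x) (hγ01 x), huv]
    have := (hγ01 x).2
    nlinarith
end

section
/- Let $X$ be an unbounded complete hyperbolic space, $\theta\in X$, $s\ge1$, and let $\mathcal{M}$ be the space of nonexpansive self-mappings of $X$ with metric $d_{\theta,s}$. For every $n\in\mathbb{N}$, the set $\mathcal{M}\setminus\mathcal{G}_n$ is porous in $(\mathcal{M},d_{\theta,s})$, where $\mathcal{G}_n=\{f\in\mathcal{M}:\sup\{\rho(f(x),f(y))/\rho(x,y): x,y\in\bar B(\theta,n),\ \rho(x,y)\ge1/n\}<1\}$. -/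
/-- Membership in `𝓖ₙ`: the restriction of `f` to `closedBall θ n` is a strict
contraction on pairs of points at distance at least `1/n`. -/
def MemG {X : Type*} [MetricSpace X] (θ : X) (n : ℕ) (f : X → X) : Prop :=
  ∃ c : ℝ, c < 1 ∧ ∀ x ∈ Metric.closedBall θ (n : ℝ), ∀ y ∈ Metric.closedBall θ (n : ℝ),
    1 / (n : ℝ) ≤ dist x y → dist (f x) (f y) ≤ c * dist x y

lemma key_t {t s : ℝ} (ht : 0 ≤ t) (hs : 1 ≤ s) : t ≤ 1 + t ^ s := by
  rcases le_or_gt t 1 with h | h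
  · have : (0:ℝ) ≤ t ^ s := Real.rpow_nonneg ht s
    linarith
  · have h1 : t ^ (1:ℝ) ≤ t ^ s := Real.rpow_le_rpow_of_exponent_le h.le hs
    rw [Real.rpow_one] at h1
    linarith

lemma one_add_pow_pos {t s : ℝ} (ht : 0 ≤ t) : (0:ℝ) < 1 + t ^ s := by
  have : (0:ℝ) ≤ t ^ s := Real.rpow_nonneg ht s
  linarith

lemma bdd_ds {X : Type*} [MetricSpace X] (θ : X) {s : ℝ} (hs : 1 ≤ s) (f g : X → X)
    (hf : Nonexp f) (hg : Nonexp g) :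
    BddAbove (Set.range fun x => dist (f x) (g x) / (1 + dist x θ ^ s)) := by
  refine ⟨2 + dist (f θ) (g θ), ?_⟩
  rintro _ ⟨x, rfl⟩
  have hpos : (0:ℝ) < 1 + dist x θ ^ s := one_add_pow_pos dist_nonneg
  rw [div_le_iff₀ hpos]
  have h1 : dist (f x) (g x) ≤ dist (f x) (f θ) + dist (f θ) (g θ) + dist (g θ) (g x) :=
    dist_triangle4 _ _ _ _
  have h2 : dist (f x) (f θ) ≤ dist x θ := hf x θ
  have h3 : dist (g θ) (g x) ≤ dist x θ := by
    have := hg θ x; rwa [dist_comm x θ]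
  have h4 : dist x θ ≤ 1 + dist x θ ^ s := key_t dist_nonneg hs
  have h5 : (0:ℝ) ≤ dist (f θ) (g θ) := dist_nonneg
  have h6 : (0:ℝ) ≤ dist x θ ^ s := Real.rpow_nonneg dist_nonneg s
  nlinarith

lemma ds_pointwise {X : Type*} [MetricSpace X] (θ : X) {s : ℝ} (hs : 1 ≤ s) (f g : X → X)
    (hf : Nonexp f) (hg : Nonexp g) (x : X) :
    dist (f x) (g x) ≤ Ds θ s f g * (1 + dist x θ ^ s) := by
  have hpos : (0:ℝ) < 1 + dist x θ ^ s := one_add_pow_pos dist_nonneg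
  have h := le_ciSup (bdd_ds θ hs f g hf hg) x
  rw [div_le_iff₀ hpos] at h
  exact h

lemma ds_nonneg {X : Type*} [MetricSpace X] (θ : X) {s : ℝ} (hs : 1 ≤ s) (f g : X → X)
    (hf : Nonexp f) (hg : Nonexp g) : 0 ≤ Ds θ s f g := by
  have h := le_ciSup (bdd_ds θ hs f g hf hg) θ
  have hpos : (0:ℝ) < 1 + dist θ θ ^ s := one_add_pow_pos dist_nonneg
  have : (0:ℝ) ≤ dist (f θ) (g θ) / (1 + dist θ θ ^ s) :=
    div_nonneg dist_nonneg hpos.le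
  exact le_trans this h

set_option maxHeartbeats 1000000 in
/-- `𝓜 \ 𝓖ₙ` is porous in `(𝓜, d_{θ,s})`. -/
theorem compl_Gn_porous_ds {X : Type*} [MetricSpace X] [CompleteSpace X]
    (H : HyperbolicW X) (hub : Unbdd X) (θ : X)
    (s : ℝ) (hs : 1 ≤ s) (n : ℕ) (hn : 1 ≤ n) :
    ∀ f : X → X, Nonexp f → ¬ MemG θ n f →
      ∃ r₀ : ℝ, 0 < r₀ ∧ ∃ α : ℝ, 0 < α ∧
        ∀ r : ℝ, 0 < r → r < r₀ →
          ∃ g : X → X, Nonexp g ∧ Ds θ s f g < r ∧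
            ∀ h : X → X, Nonexp h → Ds θ s g h < α * r → MemG θ n h := by
  intro f hf _
  set K : ℝ := dist θ (f θ) with hK
  have hK0 : 0 ≤ K := dist_nonneg
  set A : ℝ := 1 + K with hA
  have hA0 : 0 < A := by positivity
  have hn0 : (0:ℝ) < (n:ℝ) := by exact_mod_cast hn
  have hns0 : (0:ℝ) ≤ (n:ℝ) ^ s := Real.rpow_nonneg hn0.le s
  set B : ℝ := (n:ℝ) * (1 + (n:ℝ) ^ s) with hB
  have hB0 : 0 < B := by positivity
  refine ⟨2 * A, by positivity, 1 / (8 * A * B), by positivity, ?_⟩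
  intro r hr hrr
  set γ : ℝ := r / (2 * A) with hγ
  have hγ0 : 0 < γ := by positivity
  have hγ1 : γ < 1 := by
    rw [hγ, div_lt_one (by positivity)]; exact hrr
  have hmem : (1 - γ) ∈ Set.Icc (0:ℝ) 1 := ⟨by linarith, by linarith⟩
  set g : X → X := fun x => H.W θ (f x) (1 - γ) with hg
  have hglip : ∀ x y : X, dist (g x) (g y) ≤ (1 - γ) * dist x y := by
    intro x y
    calc dist (g x) (g y) ≤ (1 - γ) * dist (f x) (f y) := H.hyp θ (f x) (f y) _ hmem
    _ ≤ (1 - γ) * dist x y := by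
        have := hf x y
        nlinarith [dist_nonneg (x := f x) (y := f y)]
  have hgne : Nonexp g := by
    intro x y
    have := hglip x y
    nlinarith [dist_nonneg (x := x) (y := y)]
  have hdistfg : ∀ x : X, dist (f x) (g x) = γ * dist θ (f x) := by
    intro x
    rw [dist_comm]
    have := H.dist_right θ (f x) (1 - γ) hmem
    rw [hg]; simpa using this
  refine ⟨g, hgne, ?_, ?_⟩
  · -- Ds f g < r
    haveI : Nonempty X := ⟨θ⟩
    have hle : Ds θ s f g ≤ r / 2 := by
      apply ciSup_le
      intro x
      have hpos : (0:ℝ) < 1 + dist x θ ^ s := one_add_pow_pos dist_nonneg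
      rw [div_le_iff₀ hpos, hdistfg x]
      have h1 : dist θ (f x) ≤ K + dist x θ := by
        calc dist θ (f x) ≤ dist θ (f θ) + dist (f θ) (f x) := dist_triangle _ _ _
        _ ≤ K + dist x θ := by
            have := hf θ x; rw [dist_comm θ x] at this; rw [hK]; linarith
      have h4 : dist x θ ≤ 1 + dist x θ ^ s := key_t dist_nonneg hs
      have h6 : (0:ℝ) ≤ dist x θ ^ s := Real.rpow_nonneg dist_nonneg s
      -- γ * (K + t) ≤ (r/2) * (1 + t^s), where γ * 2 * A = r i.e. γ*(1+K) = r/2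
      have hγr : γ * A = r / 2 := by
        rw [hγ]; field_simp
      have : γ * (K + dist x θ) ≤ γ * (A * (1 + dist x θ ^ s)) := by
        have : K + dist x θ ≤ A * (1 + dist x θ ^ s) := by
          rw [hA]; nlinarith
        nlinarith
      calc γ * dist θ (f x) ≤ γ * (K + dist x θ) := by nlinarith
      _ ≤ γ * A * (1 + dist x θ ^ s) := by linarith [this]
      _ = r / 2 * (1 + dist x θ ^ s) := by rw [hγr]
    linarith
  · -- porosity hole
    intro h hh hDh
    set D : ℝ := Ds θ s g h with hD
    have hD0 : 0 ≤ D := ds_nonneg θ hs g h hgne hh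
    refine ⟨(1 - γ) + 2 * D * B, ?_, ?_⟩
    · -- < 1
      have : 2 * D * B < 2 * (1 / (8 * A * B) * r) * B := by nlinarith
      have h2 : 2 * (1 / (8 * A * B) * r) * B = r / (4 * A) := by field_simp; ring
      have h3 : r / (4 * A) < γ := by
        rw [hγ, div_lt_div_iff₀ (by positivity) (by positivity)]; nlinarith
      linarith
    · intro x hx y hy hxy
      simp only [Metric.mem_closedBall] at hx hy
      have hbx : dist (g x) (h x) ≤ D * (1 + (n:ℝ) ^ s) := by
        have h1 := ds_pointwise θ hs g h hgne hh x
        have h2 : dist x θ ^ s ≤ (n:ℝ) ^ s :=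
          Real.rpow_le_rpow dist_nonneg hx (by linarith)
        nlinarith
      have hby : dist (g y) (h y) ≤ D * (1 + (n:ℝ) ^ s) := by
        have h1 := ds_pointwise θ hs g h hgne hh y
        have h2 : dist y θ ^ s ≤ (n:ℝ) ^ s :=
          Real.rpow_le_rpow dist_nonneg hy (by linarith)
        nlinarith
      have htri : dist (h x) (h y) ≤ dist (h x) (g x) + dist (g x) (g y) + dist (g y) (h y) :=
        dist_triangle4 _ _ _ _
      have hgg : dist (g x) (g y) ≤ (1 - γ) * dist x y := hglip x y
      have hxy' : 1 / (n:ℝ) ≤ dist x y := hxy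
      have hd0 : 0 < dist x y := lt_of_lt_of_le (by positivity) hxy'
      -- 2 * D * (1 + n^s) ≤ 2 * D * B * dist x y  since 1/n ≤ dist x y
      have hkey : 2 * (D * (1 + (n:ℝ) ^ s)) ≤ 2 * D * B * dist x y := by
        have h1 : 1 ≤ (n:ℝ) * dist x y := by
          rw [div_le_iff₀ hn0] at hxy'; linarith
        have h2 : (0:ℝ) ≤ D * (1 + (n:ℝ) ^ s) := mul_nonneg hD0 (by positivity)
        have h3 := mul_le_mul_of_nonneg_left h1 h2
        rw [hB]; nlinarith [h3]
      rw [dist_comm (h x) (g x)] at htri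
      have := hbx
      nlinarith
end

section
/- Let $X$ be a complete separable hyperbolic space, $(z_n)$ a dense sequence, $\mathcal{M}$ the nonexpansive self-mappings of $X$ with the metric $d_z$ of pointwise convergence. For every pair of distinct points $x,y\in X$, the complement of the set $\mathcal{F}_{x,y}:=\{f\in\mathcal{M}:\exists r>0\ \forall\xi\in B(x,r)\ \forall\eta\in B(y,r):\rho(f(\xi),f(\eta))<\rho(\xi,\eta)\}$ is nowhere dense in $(\mathcal{M},d_z)$. -/
/-- The metric `d_z` of pointwise convergence, built from a dense sequence
`z : ℕ → X` (indexed from `0`, corresponding to the paper's `z_{n+1}`). -/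
noncomputable def Dz {X : Type*} [MetricSpace X] (z : ℕ → X) (f g : X → X) : ℝ :=
  ∑' n : ℕ, (1 / 2) ^ (n + 1) *
    (dist (f (z n)) (g (z n)) / (1 + dist (f (z n)) (g (z n))))

section Aux

variable {X : Type*} [MetricSpace X]

/-- The `n`-th term of the series defining `Dz`. -/
noncomputable def dzterm (z : ℕ → X) (f g : X → X) (n : ℕ) : ℝ :=
  (1 / 2) ^ (n + 1) *
    (dist (f (z n)) (g (z n)) / (1 + dist (f (z n)) (g (z n))))

lemma Dz_eq_tsum (z : ℕ → X) (f g : X → X) : Dz z f g = ∑' n, dzterm z f g n := rfl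

lemma dzterm_nonneg (z : ℕ → X) (f g : X → X) (n : ℕ) : 0 ≤ dzterm z f g n := by
  have h := dist_nonneg (x := f (z n)) (y := g (z n))
  unfold dzterm
  positivity

lemma dzterm_le_pow (z : ℕ → X) (f g : X → X) (n : ℕ) :
    dzterm z f g n ≤ (1 / 2) ^ (n + 1) := by
  have h := dist_nonneg (x := f (z n)) (y := g (z n))
  have hq : dist (f (z n)) (g (z n)) / (1 + dist (f (z n)) (g (z n))) ≤ 1 := by
    rw [div_le_one (by linarith)]; linarith
  have hp : (0:ℝ) ≤ (1 / 2) ^ (n + 1) := by positivity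
  calc dzterm z f g n ≤ (1 / 2) ^ (n + 1) * 1 :=
        mul_le_mul_of_nonneg_left hq hp
    _ = (1 / 2) ^ (n + 1) := mul_one _

lemma dzterm_le_dist (z : ℕ → X) (f g : X → X) (n : ℕ) :
    dzterm z f g n ≤ dist (f (z n)) (g (z n)) := by
  have h := dist_nonneg (x := f (z n)) (y := g (z n))
  have hq : dist (f (z n)) (g (z n)) / (1 + dist (f (z n)) (g (z n))) ≤
      dist (f (z n)) (g (z n)) := div_le_self h (by linarith)
  have hp : (1 / 2 : ℝ) ^ (n + 1) ≤ 1 := pow_le_one₀ (by norm_num) (by norm_num)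
  have hq0 : 0 ≤ dist (f (z n)) (g (z n)) / (1 + dist (f (z n)) (g (z n))) := by positivity
  calc dzterm z f g n ≤ 1 * (dist (f (z n)) (g (z n)) / (1 + dist (f (z n)) (g (z n)))) :=
        mul_le_mul_of_nonneg_right hp hq0
    _ = _ := one_mul _
    _ ≤ dist (f (z n)) (g (z n)) := hq

lemma summable_pow_half : Summable (fun n : ℕ => (1 / 2 : ℝ) ^ (n + 1)) :=
  (summable_nat_add_iff 1).mpr
    (summable_geometric_of_lt_one (by norm_num : (0:ℝ) ≤ 1 / 2) (by norm_num))

lemma dz_summable (z : ℕ → X) (f g : X → X) : Summable (dzterm z f g) :=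
  Summable.of_nonneg_of_le (dzterm_nonneg z f g) (dzterm_le_pow z f g) summable_pow_half

lemma dzterm_le_Dz (z : ℕ → X) (f g : X → X) (k : ℕ) : dzterm z f g k ≤ Dz z f g := by
  rw [Dz_eq_tsum]
  exact Summable.le_tsum (dz_summable z f g) k fun i _ => dzterm_nonneg z f g i

lemma Dz_le (z : ℕ → X) (f g : X → X) (N : ℕ) :
    Dz z f g ≤ (∑ n ∈ Finset.range N, dist (f (z n)) (g (z n))) + (1 / 2) ^ N := by
  have hsum := dz_summable z f g
  rw [Dz_eq_tsum, ← Summable.sum_add_tsum_nat_add N hsum]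
  gcongr
  · exact dzterm_le_dist z f g _
  · -- tail
    have hsum2 : Summable (fun i : ℕ => dzterm z f g (i + N)) :=
      (summable_nat_add_iff N).mpr hsum
    have hsum3 : Summable (fun i : ℕ => (1 / 2 : ℝ) ^ (i + N + 1)) :=
      (summable_nat_add_iff (N + 1)).mpr
        (summable_geometric_of_lt_one (by norm_num) (by norm_num))
    have h1 : (∑' i : ℕ, dzterm z f g (i + N)) ≤ ∑' i : ℕ, (1 / 2 : ℝ) ^ (i + N + 1) :=
      Summable.tsum_le_tsum (fun i => dzterm_le_pow z f g (i + N)) hsum2 hsum3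
    have h2 : (∑' i : ℕ, (1 / 2 : ℝ) ^ (i + N + 1)) = (1 / 2) ^ N := by
      have : ∀ i : ℕ, (1 / 2 : ℝ) ^ (i + N + 1) = (1 / 2 : ℝ) ^ i * ((1 / 2 : ℝ) ^ (N + 1)) := by
        intro i; rw [← pow_add]; ring_nf
      simp only [this]
      rw [tsum_mul_right, tsum_geometric_of_lt_one (by norm_num) (by norm_num)]
      norm_num [pow_succ]
      ring
    linarith
  done

lemma ratio_lt {s t : ℝ} (hs : 0 ≤ s) (ht : 0 ≤ t)
    (h : s / (1 + s) < t / (1 + t)) : s < t := by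
  rw [div_lt_div_iff₀ (by linarith) (by linarith)] at h
  nlinarith

end Aux

/-- the complement of `𝓕_{x,y}` is nowhere dense in `(𝓜, d_z)`:
every `d_z`-ball contains a ball consisting of mappings in `𝓕_{x,y}`. -/
theorem compl_Fxy_nowhere_dense {X : Type*} [MetricSpace X] [CompleteSpace X]
    (H : HyperbolicW X) (z : ℕ → X) (hz : DenseRange z)
    (x y : X) (hxy : x ≠ y) :
    ∀ f : X → X, Nonexp f → ∀ ε : ℝ, 0 < ε →
      ∃ g : X → X, Nonexp g ∧ Dz z f g < ε ∧
        ∃ δ : ℝ, 0 < δ ∧ ∀ h : X → X, Nonexp h → Dz z g h < δ →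
          ∃ r : ℝ, 0 < r ∧ ∀ ξ ∈ Metric.ball x r, ∀ η ∈ Metric.ball y r,
            dist (h ξ) (h η) < dist ξ η := by
  intro f hf ε hε
  obtain ⟨N, hN⟩ := exists_pow_lt_of_lt_one (by linarith : (0:ℝ) < ε / 2)
    (by norm_num : (1 / 2 : ℝ) < 1)
  obtain ⟨S, hSdef⟩ : ∃ t : ℝ, t = ∑ n ∈ Finset.range N, dist (f x) (f (z n)) := ⟨_, rfl⟩
  have hS0 : 0 ≤ S := by rw [hSdef]; exact Finset.sum_nonneg fun _ _ => dist_nonneg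
  obtain ⟨e, hedef⟩ : ∃ t : ℝ, t = min (1 / 2) (ε / (2 * (S + 1))) := ⟨_, rfl⟩
  have he0 : 0 < e := hedef ▸ lt_min (by norm_num) (by positivity)
  have he1 : e ≤ 1 / 2 := hedef ▸ min_le_left _ _
  obtain ⟨l, hldef⟩ : ∃ t : ℝ, t = 1 - e := ⟨_, rfl⟩
  have hl0 : 0 ≤ l := by rw [hldef]; linarith
  have hl1 : l ≤ 1 := by rw [hldef]; linarith
  have hlmem : l ∈ Set.Icc (0:ℝ) 1 := ⟨hl0, hl1⟩
  obtain ⟨g, hgdef⟩ : ∃ t : X → X, t = fun ξ => H.W (f x) (f ξ) l := ⟨_, rfl⟩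
  have hgcon : ∀ a b : X, dist (g a) (g b) ≤ l * dist a b := by
    intro a b
    have h1 : dist (g a) (g b) ≤ l * dist (f a) (f b) := by
      simp only [hgdef]
      exact H.hyp (f x) (f a) (f b) l hlmem
    exact h1.trans (mul_le_mul_of_nonneg_left (hf a b) hl0)
  have hgne : Nonexp g := by
    intro a b
    calc dist (g a) (g b) ≤ l * dist a b := hgcon a b
      _ ≤ 1 * dist a b := mul_le_mul_of_nonneg_right hl1 dist_nonneg
      _ = dist a b := one_mul _
  have hdfg : ∀ n : ℕ, dist (f (z n)) (g (z n)) = e * dist (f x) (f (z n)) := by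
    intro n
    rw [dist_comm]
    have := H.dist_right (f x) (f (z n)) l hlmem
    simp only [hgdef]
    rw [this, hldef]
    ring
  refine ⟨g, hgne, ?_, ?_⟩
  · -- Dz f g < ε
    have h1 : Dz z f g ≤ (∑ n ∈ Finset.range N, dist (f (z n)) (g (z n))) + (1 / 2) ^ N :=
      Dz_le z f g N
    have h2 : (∑ n ∈ Finset.range N, dist (f (z n)) (g (z n))) = e * S := by
      rw [hSdef, Finset.mul_sum]
      exact Finset.sum_congr rfl fun n _ => hdfg n
    have h3 : e * S < ε / 2 := by
      have h4 : e * S ≤ (ε / (2 * (S + 1))) * S :=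
        mul_le_mul_of_nonneg_right (hedef ▸ min_le_right (1/2 : ℝ) (ε / (2 * (S + 1)))) hS0
      have h5 : (ε / (2 * (S + 1))) * S < ε / 2 := by
        rw [div_mul_eq_mul_div, div_lt_div_iff₀ (by positivity) (by norm_num)]
        nlinarith
      linarith
    linarith
  · -- the ball around g
    have hDxy : 0 < dist x y := dist_pos.mpr hxy
    obtain ⟨D, hDdef⟩ : ∃ t : ℝ, t = dist x y := ⟨_, rfl⟩
    have hD : 0 < D := hDdef ▸ hDxy
    obtain ⟨r, hrdef⟩ : ∃ t : ℝ, t = e * D / 16 := ⟨_, rfl⟩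
    have hr0 : 0 < r := by rw [hrdef]; positivity
    obtain ⟨i, hi⟩ := hz.exists_dist_lt x hr0
    obtain ⟨j, hj⟩ := hz.exists_dist_lt y hr0
    obtain ⟨K, hKdef⟩ : ∃ t : ℕ, t = max i j := ⟨_, rfl⟩
    refine ⟨(1 / 2) ^ (K + 1) * (r / (1 + r)), by positivity, ?_⟩
    intro h hh hDg
    have key : ∀ k : ℕ, k ≤ K → dist (g (z k)) (h (z k)) < r := by
      intro k hk
      have hb : dzterm z g h k ≤ Dz z g h := dzterm_le_Dz z g h k
      have hpow : (1 / 2 : ℝ) ^ (K + 1) ≤ (1 / 2) ^ (k + 1) :=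
        pow_le_pow_of_le_one (by norm_num) (by norm_num) (by omega)
      have hrr : (0:ℝ) < r / (1 + r) := by positivity
      have : (1 / 2 : ℝ) ^ (k + 1) *
          (dist (g (z k)) (h (z k)) / (1 + dist (g (z k)) (h (z k)))) <
          (1 / 2) ^ (k + 1) * (r / (1 + r)) := by
        have h6 : (1 / 2 : ℝ) ^ (K + 1) * (r / (1 + r)) ≤
            (1 / 2) ^ (k + 1) * (r / (1 + r)) :=
          mul_le_mul_of_nonneg_right hpow (le_of_lt hrr)
        calc (1 / 2 : ℝ) ^ (k + 1) *
            (dist (g (z k)) (h (z k)) / (1 + dist (g (z k)) (h (z k))))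
            = dzterm z g h k := rfl
          _ ≤ Dz z g h := hb
          _ < (1 / 2) ^ (K + 1) * (r / (1 + r)) := hDg
          _ ≤ (1 / 2) ^ (k + 1) * (r / (1 + r)) := h6
      have hlt : dist (g (z k)) (h (z k)) / (1 + dist (g (z k)) (h (z k))) < r / (1 + r) :=
        lt_of_mul_lt_mul_left this (by positivity)
      exact ratio_lt dist_nonneg (le_of_lt hr0) hlt
    have hgi : dist (g (z i)) (h (z i)) < r := key i (by rw [hKdef]; exact le_max_left _ _)
    have hgj : dist (g (z j)) (h (z j)) < r := key j (by rw [hKdef]; exact le_max_right _ _)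
    refine ⟨r, hr0, ?_⟩
    intro ξ hξ η hη
    rw [Metric.mem_ball] at hξ hη
    -- triangle inequality chains
    have t1 : dist (h ξ) (h η) ≤
        dist ξ (z i) + dist (h (z i)) (h (z j)) + dist (z j) η := by
      calc dist (h ξ) (h η) ≤ dist (h ξ) (h (z i)) + dist (h (z i)) (h η) :=
            dist_triangle _ _ _
        _ ≤ dist (h ξ) (h (z i)) + (dist (h (z i)) (h (z j)) + dist (h (z j)) (h η)) := by
            linarith [dist_triangle (h (z i)) (h (z j)) (h η)]
        _ ≤ dist ξ (z i) + dist (h (z i)) (h (z j)) + dist (z j) η := by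
            linarith [hh ξ (z i), hh (z j) η]
    have t2 : dist (h (z i)) (h (z j)) ≤
        dist (g (z i)) (h (z i)) + l * dist (z i) (z j) + dist (g (z j)) (h (z j)) := by
      calc dist (h (z i)) (h (z j)) ≤
            dist (h (z i)) (g (z i)) + dist (g (z i)) (h (z j)) := dist_triangle _ _ _
        _ ≤ dist (h (z i)) (g (z i)) + (dist (g (z i)) (g (z j)) + dist (g (z j)) (h (z j))) := by
            linarith [dist_triangle (g (z i)) (g (z j)) (h (z j))]
        _ ≤ dist (g (z i)) (h (z i)) + l * dist (z i) (z j) + dist (g (z j)) (h (z j)) := by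
            rw [dist_comm (h (z i)) (g (z i))]
            linarith [hgcon (z i) (z j)]
    have t3 : dist (z i) (z j) ≤ dist x (z i) + D + dist y (z j) := by
      calc dist (z i) (z j) ≤ dist (z i) x + dist x (z j) := dist_triangle _ _ _
        _ ≤ dist (z i) x + (dist x y + dist y (z j)) := by
            linarith [dist_triangle x y (z j)]
        _ = dist x (z i) + D + dist y (z j) := by rw [dist_comm (z i) x, hDdef]; ring
    have t4 : l * dist (z i) (z j) ≤ l * (D + 2 * r) := by
      apply mul_le_mul_of_nonneg_left _ hl0
      linarith
    have t5 : dist ξ (z i) ≤ dist ξ x + dist x (z i) := dist_triangle _ _ _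
    have t6 : dist (z j) η ≤ dist (z j) y + dist y η := dist_triangle _ _ _
    have t7 : dist ξ x < r := hξ
    have t8 : dist η y < r := hη
    have t9 : D ≤ dist x ξ + dist ξ η + dist η y := by
      calc D = dist x y := hDdef
        _ ≤ dist x ξ + dist ξ y := dist_triangle _ _ _
        _ ≤ dist x ξ + (dist ξ η + dist η y) := by linarith [dist_triangle ξ η y]
        _ = dist x ξ + dist ξ η + dist η y := by ring
    have hxixi : dist x ξ = dist ξ x := dist_comm _ _
    have hyy : dist y η = dist η y := dist_comm _ _
    have hzjy : dist (z j) y = dist y (z j) := dist_comm _ _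
    -- arithmetic: everything is linear in the atom `e * D`
    have heD : 0 < e * D := by positivity
    have heeD : 0 ≤ e * (e * D) := by positivity
    have hexp : l * (D + 2 * r) = D + (e * D) / 8 - e * D - e * (e * D) / 8 := by
      rw [hldef, hrdef]; ring
    have hexp_le : l * (D + 2 * r) ≤ D + (e * D) / 8 - e * D := by
      rw [hexp]; linarith
    have hr16 : r = (e * D) / 16 := hrdef
    have b1 : dist ξ (z i) < 2 * r := by linarith
    have b2 : dist (z j) η < 2 * r := by linarith
    have b3 : dist (h (z i)) (h (z j)) < 2 * r + (D + (e * D) / 8 - e * D) := by linarith [t2, hgi, hgj, t4, hexp_le]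
    have b4 : dist (h ξ) (h η) < 6 * r + D + (e * D) / 8 - e * D := by linarith
    have b5 : D - 2 * r < dist ξ η := by linarith
    linarith
end
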